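/- arXiv:2112.13024 — 2 statements merged into one kernel-verified Lean document; each statement's English description precedes it below -/
import Mathlib

section
/- For all connected graphs G and H, μ(G □ H) ≥ max{μ(G)·μ_i(H), μ(H)·μ_i(G)}. In particular, if X_G is a mutual-visibility set of G and X_H an independent mutual-visibility set of H, then X_G × X_H is a mutual-visibility set of G □ H. -/
open SimpleGraph

/-- Two vertices `u v ∈ X` are `X`-visible in `G`: there is a shortest `u,v`-path
whose only vertices in `X` are `u` and `v`. -/
def VisiblePair {V : Type*} (G : SimpleGraph V) (X : Set V) (u v : V) : Prop :=
  ∃ p : G.Walk u v, p.IsPath ∧ p.length = G.dist u v ∧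
    ∀ w ∈ p.support, w ∈ X → w = u ∨ w = v

/-- `X` is a mutual-visibility set of `G`. -/
def IsMVSet {V : Type*} (G : SimpleGraph V) (X : Set V) : Prop :=
  ∀ u ∈ X, ∀ v ∈ X, u ≠ v → VisiblePair G X u v

/-- `X` is an independent set of `G`. -/
def IsIndep {V : Type*} (G : SimpleGraph V) (X : Set V) : Prop :=
  ∀ u ∈ X, ∀ v ∈ X, ¬ G.Adj u v

/-- The mutual-visibility number `μ(G)`. -/
noncomputable def mu {V : Type*} (G : SimpleGraph V) : ℕ :=
  sSup {n | ∃ X : Set V, IsMVSet G X ∧ X.ncard = n}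

/-- The independent mutual-visibility number `μᵢ(G)`. -/
noncomputable def muI {V : Type*} (G : SimpleGraph V) : ℕ :=
  sSup {n | ∃ X : Set V, IsMVSet G X ∧ IsIndep G X ∧ X.ncard = n}

/-- The independence number `α(G)`. -/
noncomputable def indepNumber {V : Type*} (G : SimpleGraph V) : ℕ :=
  sSup {n | ∃ X : Set V, IsIndep G X ∧ X.ncard = n}


/-!
In `G □ H`, take `(g, h), (g', h') ∈ X_G × X_H`. If `h = h'`, copy a visible `g,g'`-geodesic of `G`
into the layer `G × {h}`. Otherwise let `h₁` be the second vertex of a visible `h,h'`-geodesic of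
`H`. Independence of `X_H` gives `h₁ ∉ X_H`, so the geodesic that steps from `(g, h)` to `(g, h₁)`,
crosses the layer `G × {h₁}` to `(g', h₁)`, and then finishes in the fibre `{g'} × H` meets
`X_G × X_H` only at its ends. Products of maximum sets give the bound on `μ`, and the second term of
the maximum follows by the symmetry `G □ H ≃ H □ G`.
-/

namespace SimpleGraph

variable {V V' W : Type*} {G : SimpleGraph V} {G' : SimpleGraph V'} {H : SimpleGraph W}

@[simp]
lemma Walk.length_boxProdLeft {g g' : V} (p : G.Walk g g') (h : W) :
    (p.boxProdLeft H h).length = p.length :=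
  p.length_map _

@[simp]
lemma Walk.length_boxProdRight {h h' : W} (g : V) (q : H.Walk h h') :
    (q.boxProdRight G g).length = q.length :=
  q.length_map _

lemma Walk.support_boxProdLeft {g g' : V} (p : G.Walk g g') (h : W) :
    (p.boxProdLeft H h).support = p.support.map (·, h) :=
  p.support_map _

lemma Walk.support_boxProdRight {h h' : W} (g : V) (q : H.Walk h h') :
    (q.boxProdRight G g).support = q.support.map (g, ·) :=
  q.support_map _

lemma dist_boxProd {g g' : V} {h h' : W} (hG : G.Reachable g g') (hH : H.Reachable h h') :
    (G □ H).dist (g, h) (g', h') = G.dist g g' + H.dist h h' := by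
  have hGH := (reachable_boxProd.2 ⟨hG, hH⟩ : (G □ H).Reachable (g, h) (g', h')).coe_dist_eq_edist
  rw [edist_boxProd, ← hG.coe_dist_eq_edist, ← hH.coe_dist_eq_edist] at hGH
  exact_mod_cast hGH

lemma Iso.dist_eq (f : G ≃g G') (u v : V) : G'.dist (f u) (f v) = G.dist u v := by
  by_cases hr : G.Reachable u v
  · refine le_antisymm ?_ ?_
    · obtain ⟨p, hp⟩ := hr.exists_walk_length_eq_dist
      simpa [hp] using dist_le (p.map f.toHom)
    · obtain ⟨q, hq⟩ := (hr.map f.toHom).exists_walk_length_eq_dist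
      simpa [hq] using dist_le (q.map f.symm.toHom)
  · rw [dist_eq_zero_of_not_reachable hr,
      dist_eq_zero_of_not_reachable (Iso.reachable_iff.not.2 hr)]

end SimpleGraph

section Visibility

variable {V V' W : Type*} {G : SimpleGraph V} {G' : SimpleGraph V'} {H : SimpleGraph W}

lemma VisiblePair.of_length_eq_dist {X : Set V} {u v : V} (p : G.Walk u v)
    (hp : p.length = G.dist u v) (hX : ∀ w ∈ p.support, w ∈ X → w = u ∨ w = v) :
    VisiblePair G X u v :=
  ⟨p, p.isPath_of_length_eq_dist hp, hp, hX⟩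

lemma VisiblePair.boxProd_layer {XG : Set V} {g g' : V} (hv : VisiblePair G XG g g')
    (XH : Set W) (h : W) : VisiblePair (G □ H) (XG ×ˢ XH) (g, h) (g', h) := by
  obtain ⟨p, -, hp, hpX⟩ := hv
  refine .of_length_eq_dist (p.boxProdLeft H h) ?_ ?_
  · simp [dist_boxProd ⟨p⟩ .rfl, hp]
  · simp only [Walk.support_boxProdLeft, List.mem_map]
    rintro _ ⟨x, hx, rfl⟩ hxX
    simpa using hpX x hx hxX.1

lemma VisiblePair.exists_adj_notMem {X : Set W} {h h' : W} (hv : VisiblePair H X h h')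
    (hne : h ≠ h') (hna : ¬ H.Adj h h') :
    ∃ h₁, H.Adj h h₁ ∧ h₁ ∉ X ∧ ∃ q : H.Walk h₁ h', q.length + 1 = H.dist h h' ∧
      ∀ y ∈ q.support, y ∈ X → y = h' := by
  obtain ⟨_ | ⟨e, q⟩, hpath, hlen, hX⟩ := hv
  · exact absurd rfl hne
  refine ⟨_, e, fun h₁X => ?_, q, hlen, fun y hy hyX => ?_⟩
  · rcases hX _ (by simp) h₁X with rfl | rfl
    exacts [H.loopless.irrefl _ e, hna e]
  · refine (hX y (by simp [hy]) hyX).resolve_left ?_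
    rintro rfl
    exact (Walk.cons_isPath_iff _ _).1 hpath |>.2 hy

lemma VisiblePair.boxProd_of_adj_notMem {XG : Set V} {XH : Set W} {g g' : V} {h h₁ h' : W}
    (hG : G.Reachable g g') (e : H.Adj h h₁) (h₁X : h₁ ∉ XH) (q : H.Walk h₁ h')
    (hq : q.length + 1 = H.dist h h') (hqX : ∀ y ∈ q.support, y ∈ XH → y = h') :
    VisiblePair (G □ H) (XG ×ˢ XH) (g, h) (g', h') := by
  obtain ⟨p, hp⟩ := hG.exists_walk_length_eq_dist
  refine .of_length_eq_dist
    (.cons (boxProd_adj_right.2 e) ((p.boxProdLeft H h₁).append (q.boxProdRight G g'))) ?_ ?_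
  · simp only [Walk.length_cons, Walk.length_append, Walk.length_boxProdLeft,
      Walk.length_boxProdRight, dist_boxProd hG ⟨.cons e q⟩, hp, ← hq]
    omega
  · simp only [Walk.support_cons, Walk.support_append, Walk.support_boxProdLeft,
      Walk.support_boxProdRight, List.mem_cons, List.mem_append, List.mem_map]
    rintro w (rfl | ⟨x, -, rfl⟩ | hw) wX
    · exact .inl rfl
    · exact absurd wX.2 h₁X
    · obtain ⟨y, hy, rfl⟩ := List.mem_map.1 (List.mem_of_mem_tail hw)
      simp [hqX y hy wX.2]

lemma IsMVSet.boxProd {XG : Set V} {XH : Set W} (hG : G.Connected) (hXG : IsMVSet G XG)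
    (hXH : IsMVSet H XH) (hXH_indep : IsIndep H XH) : IsMVSet (G □ H) (XG ×ˢ XH) := by
  rintro ⟨g, h⟩ ⟨hg, hh⟩ ⟨g', h'⟩ ⟨hg', hh'⟩ hne
  by_cases hhh : h = h'
  · subst hhh
    exact (hXG g hg g' hg' fun hgg => hne (by rw [hgg])).boxProd_layer XH h
  · obtain ⟨h₁, e, h₁X, q, hq, hqX⟩ :=
      (hXH h hh h' hh' hhh).exists_adj_notMem hhh (hXH_indep h hh h' hh')
    exact .boxProd_of_adj_notMem (hG g g') e h₁X q hq hqX

lemma IsMVSet.image_iso {X : Set V} (hX : IsMVSet G X) (f : G ≃g G') : IsMVSet G' (f '' X) := by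
  rintro _ ⟨u, hu, rfl⟩ _ ⟨v, hv, rfl⟩ hne
  obtain ⟨p, hpath, hp, hpX⟩ := hX u hu v hv (ne_of_apply_ne f hne)
  refine ⟨p.map f.toHom, hpath.map f.injective, by simp [hp, f.dist_eq], ?_⟩
  simp only [Walk.support_map, List.mem_map]
  rintro _ ⟨w, hw, rfl⟩ ⟨w', hw', hww'⟩
  obtain rfl := f.injective hww'
  simpa using hpX w' hw hw'

end Visibility

section Numbers

variable {V V' W : Type*} {G : SimpleGraph V} {G' : SimpleGraph V'} {H : SimpleGraph W}

lemma bddAbove_ncard [Finite V] (P : Set V → Prop) :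
    BddAbove {n | ∃ X : Set V, P X ∧ X.ncard = n} := by
  refine ⟨Nat.card V, ?_⟩
  rintro _ ⟨X, -, rfl⟩
  exact X.ncard_le_card

lemma exists_ncard_eq_sSup [Finite V] {P : Set V → Prop} (hP : P ∅) :
    ∃ X, P X ∧ X.ncard = sSup {n | ∃ X : Set V, P X ∧ X.ncard = n} :=
  Nat.sSup_mem (s := {n | ∃ X : Set V, P X ∧ X.ncard = n}) ⟨0, ∅, hP, Set.ncard_empty V⟩
    (bddAbove_ncard P)

lemma IsMVSet.ncard_le_mu [Finite V] {X : Set V} (hX : IsMVSet G X) : X.ncard ≤ mu G :=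
  le_csSup (bddAbove_ncard _) ⟨X, hX, rfl⟩

lemma isMVSet_empty : IsMVSet G ∅ := fun _ hu => absurd hu (Set.notMem_empty _)

lemma exists_isMVSet_ncard_eq_mu [Finite V] (G : SimpleGraph V) :
    ∃ X, IsMVSet G X ∧ X.ncard = mu G :=
  exists_ncard_eq_sSup isMVSet_empty

lemma exists_isMVSet_isIndep_ncard_eq_muI [Finite V] (G : SimpleGraph V) :
    ∃ X, IsMVSet G X ∧ IsIndep G X ∧ X.ncard = muI G := by
  simpa only [muI, and_assoc] using exists_ncard_eq_sSup (P := fun X => IsMVSet G X ∧ IsIndep G X)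
    ⟨isMVSet_empty, fun _ hu => absurd hu (Set.notMem_empty _)⟩

lemma mu_mul_muI_le_mu_boxProd [Finite V] [Finite W] (hG : G.Connected) :
    mu G * muI H ≤ mu (G □ H) := by
  obtain ⟨XG, hXG, hXG_card⟩ := exists_isMVSet_ncard_eq_mu G
  obtain ⟨XH, hXH, hXH_indep, hXH_card⟩ := exists_isMVSet_isIndep_ncard_eq_muI H
  calc mu G * muI H = (XG ×ˢ XH).ncard := by rw [Set.ncard_prod, hXG_card, hXH_card]
    _ ≤ mu (G □ H) := (hXG.boxProd hG hXH hXH_indep).ncard_le_mu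

lemma SimpleGraph.Iso.mu_le [Finite V] [Finite V'] (f : G ≃g G') : mu G ≤ mu G' := by
  obtain ⟨X, hX, hX_card⟩ := exists_isMVSet_ncard_eq_mu G
  calc mu G = (f '' X).ncard := by rw [Set.ncard_image_of_injective X f.injective, hX_card]
    _ ≤ mu G' := (hX.image_iso f).ncard_le_mu

end Numbers

theorem stmt6 {V W : Type*} [Fintype V] [Fintype W] (G : SimpleGraph V)
    (H : SimpleGraph W) (hG : G.Connected) (hH : H.Connected) :
    max (mu G * muI H) (mu H * muI G) ≤ mu (G.boxProd H) ∧
    ∀ (XG : Set V) (XH : Set W), IsMVSet G XG → IsMVSet H XH → IsIndep H XH →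
      IsMVSet (G.boxProd H) (XG ×ˢ XH) :=
  ⟨max_le (mu_mul_muI_le_mu_boxProd hG)
      ((mu_mul_muI_le_mu_boxProd hH).trans (boxProdComm H G).mu_le),
    fun _ _ hXG hXH hXH_indep => hXG.boxProd hG hXH hXH_indep⟩
end

section
/- If the graph H (two paths on three vertices joined by an edge between their central vertices) is a subgraph of a connected triangle-free graph G, then μ(G) ≥ 4. Specifically, the four pendant vertices of the copy of H form a mutual-visibility set of G. -/
open SimpleGraph

/-! The two pendant vertices on the same side of the copy of `H` see each other through
their common neighbour, and triangle-freeness makes that 2-path geodesic. For pendant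
vertices `u`, `v` on opposite sides, `d(u, v) ≤ 3` along `u a b v`. If the distance is 3,
this path works, as its interior vertices are `a` and `b`. If it is 2, a common
neighbour of `u` and `v` cannot be one of the other two pendant vertices, since that
would close a triangle with `a` or with `b`. -/

namespace SimpleGraph

variable {V : Type*} {G : SimpleGraph V} {u v m : V}

theorem not_adj_of_adj_adj (htf : G.CliqueFree 3) (h₁ : G.Adj u m) (h₂ : G.Adj m v) :
    ¬G.Adj u v := fun huv =>
  isIndepSet_neighborSet_of_triangleFree G htf m h₁.symm h₂ huv.ne huv

theorem dist_eq_two_of_adj_adj (htf : G.CliqueFree 3) (h₁ : G.Adj u m) (h₂ : G.Adj m v)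
    (huv : u ≠ v) : G.dist u v = 2 :=
  le_antisymm (by simpa using dist_le (h₁.toWalk.concat h₂))
    ((h₁.reachable.trans h₂.reachable).one_lt_dist_of_ne_of_not_adj huv
      (not_adj_of_adj_adj htf h₁ h₂))

theorem exists_adj_adj_of_dist_eq_two (hd : G.dist u v = 2) : ∃ m, G.Adj u m ∧ G.Adj m v := by
  have hr : G.Reachable u v := Reachable.of_dist_ne_zero (by omega)
  obtain ⟨-, -, m, hm⟩ := edist_eq_two_iff.mp (by rw [← hr.coe_dist_eq_edist, hd]; rfl)
  rw [mem_commonNeighbors] at hm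
  exact ⟨m, hm.1, hm.2.symm⟩

end SimpleGraph

section Visibility

variable {V : Type*} {G : SimpleGraph V} {X : Set V} {u v m : V}

theorem VisiblePair.symm (h : VisiblePair G X u v) : VisiblePair G X v u := by
  obtain ⟨p, hp, hlen, hX⟩ := h
  refine ⟨p.reverse, hp.reverse, by rw [Walk.length_reverse, hlen, dist_comm], ?_⟩
  intro c hc hcX
  rw [Walk.support_reverse, List.mem_reverse] at hc
  exact (hX c hc hcX).symm

instance : Std.Symm (VisiblePair G X) := ⟨fun _ _ => VisiblePair.symm⟩

theorem visiblePair_of_length_eq_dist (p : G.Walk u v) (hlen : p.length = G.dist u v)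
    (hX : ∀ c ∈ p.support, c ∈ X → c = u ∨ c = v) : VisiblePair G X u v :=
  ⟨p, p.isPath_of_length_eq_dist hlen, hlen, hX⟩

theorem visiblePair_of_adj (h : G.Adj u v) : VisiblePair G X u v :=
  visiblePair_of_length_eq_dist h.toWalk (by simp [dist_eq_one_iff_adj.mpr h]) (by simp)

theorem visiblePair_of_adj_adj_of_dist_eq_two (h₁ : G.Adj u m) (h₂ : G.Adj m v)
    (hd : G.dist u v = 2) (hm : m ∉ X) : VisiblePair G X u v :=
  visiblePair_of_length_eq_dist (h₁.toWalk.concat h₂) (by simp [hd]) <| by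
    simp only [Walk.support_concat, Adj.support_toWalk,
      List.mem_append, List.mem_cons, List.not_mem_nil, or_false]
    rintro c ((rfl | rfl) | rfl) hc
    exacts [.inl rfl, absurd hc hm, .inr rfl]

theorem visiblePair_of_adj_adj (htf : G.CliqueFree 3) (h₁ : G.Adj u m) (h₂ : G.Adj m v)
    (huv : u ≠ v) (hm : m ∉ X) : VisiblePair G X u v :=
  visiblePair_of_adj_adj_of_dist_eq_two h₁ h₂ (dist_eq_two_of_adj_adj htf h₁ h₂ huv) hm

theorem visiblePair_of_adj_adj_adj_of_dist_eq_three {p q : V} (h₁ : G.Adj u p)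
    (h₂ : G.Adj p q) (h₃ : G.Adj q v) (hd : G.dist u v = 3) (hp : p ∉ X) (hq : q ∉ X) :
    VisiblePair G X u v :=
  visiblePair_of_length_eq_dist (.cons h₁ (.cons h₂ (.cons h₃ .nil))) (by simp [hd]) <| by
    simp only [Walk.support_cons, Walk.support_nil, List.mem_cons, List.not_mem_nil, or_false]
    rintro c (rfl | rfl | rfl | rfl) hc
    exacts [.inl rfl, absurd hc hp, absurd hc hq, .inr rfl]

/-- `u` and `v` are pendant vertices on opposite sides of a copy `u, s – p – q – v, t`
of `H`. -/
theorem visiblePair_across_of_cliqueFree (htf : G.CliqueFree 3) {p q s t : V}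
    (hup : G.Adj u p) (hps : G.Adj p s) (hpq : G.Adj p q) (hqv : G.Adj q v)
    (hqt : G.Adj q t) (huv : u ≠ v) (hpX : p ∉ X) (hqX : q ∉ X) (hX : X ⊆ {u, s, v, t}) :
    VisiblePair G X u v := by
  have hle : G.dist u v ≤ 3 := by
    simpa using dist_le (.cons hup (.cons hpq (.cons hqv .nil)) : G.Walk u v)
  have hpos : 0 < G.dist u v :=
    (hup.reachable.trans (hpq.reachable.trans hqv.reachable)).pos_dist_of_ne huv
  obtain hd | hd | hd : G.dist u v = 1 ∨ G.dist u v = 2 ∨ G.dist u v = 3 := by omega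
  · exact visiblePair_of_adj (dist_eq_one_iff_adj.mp hd)
  · obtain ⟨c, huc, hcv⟩ := exists_adj_adj_of_dist_eq_two hd
    refine visiblePair_of_adj_adj_of_dist_eq_two huc hcv hd fun hc => ?_
    rcases hX hc with rfl | rfl | rfl | rfl
    · exact huc.ne rfl
    · exact not_adj_of_adj_adj htf hup hps huc
    · exact hcv.ne rfl
    · exact not_adj_of_adj_adj htf hqv.symm hqt hcv.symm
  · exact visiblePair_of_adj_adj_adj_of_dist_eq_three hup hpq hqv hd hpX hqX

theorem le_mu_of_isMVSet [Finite V] (hX : IsMVSet G X) : X.ncard ≤ mu G :=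
  le_csSup ⟨Nat.card V, by rintro _ ⟨Y, -, rfl⟩; exact Set.ncard_le_card Y⟩ ⟨X, hX, rfl⟩

end Visibility

theorem stmt15_general {V : Type*} [Fintype V] (G : SimpleGraph V)
    (htf : G.CliqueFree 3) (x a y w b z : V) (hnd : ([x, a, y, w, b, z] : List V).Nodup)
    (h1 : G.Adj x a) (h2 : G.Adj a y) (h3 : G.Adj a b) (h4 : G.Adj w b) (h5 : G.Adj b z) :
    IsMVSet G {x, y, w, z} ∧ 4 ≤ mu G := by
  simp only [List.nodup_cons, List.mem_cons, List.not_mem_nil, or_false, List.nodup_nil,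
    and_true, not_or] at hnd
  obtain ⟨⟨hxa, hxy, hxw, hxb, hxz⟩, ⟨hay, haw, -, haz⟩, ⟨hyw, hyb, hyz⟩, ⟨hwb, hwz⟩, hbz, -⟩ :=
    hnd
  set X : Set V := {x, y, w, z}
  have haX : a ∉ X := by simp [X, Ne.symm hxa, hay, haw, haz]
  have hbX : b ∉ X := by simp [X, Ne.symm hxb, Ne.symm hyb, Ne.symm hwb, hbz]
  have hmv : IsMVSet G X := by
    change X.Pairwise (VisiblePair G X)
    simp only [X, Set.pairwise_insert_of_symm, Set.pairwise_singleton, Set.mem_insert_iff,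
      Set.mem_singleton_iff, forall_eq_or_imp, forall_eq]
    refine ⟨⟨⟨trivial, fun _ => visiblePair_of_adj_adj htf h4 h5 hwz hbX⟩,
      fun _ => ?_, fun _ => ?_⟩, fun _ => visiblePair_of_adj_adj htf h1 h2 hxy haX,
      fun _ => ?_, fun _ => ?_⟩
    · exact visiblePair_across_of_cliqueFree htf h2.symm h1.symm h3 h4.symm h5 hyw haX hbX
        (Set.insert_comm x y _).le
    · exact visiblePair_across_of_cliqueFree htf h2.symm h1.symm h3 h5 h4.symm hyz haX hbX
        (by rw [Set.insert_comm y x, Set.pair_comm z w])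
    · exact visiblePair_across_of_cliqueFree htf h1 h2 h3 h4.symm h5 hxw haX hbX le_rfl
    · exact visiblePair_across_of_cliqueFree htf h1 h2 h3 h5 h4.symm hxz haX hbX
        (by rw [Set.pair_comm z w])
  have hcard : X.ncard = 4 :=
    Set.ncard_eq_four.mpr ⟨x, y, w, z, hxy, hxw, hxz, hyw, hyz, hwz, rfl⟩
  exact ⟨hmv, hcard ▸ le_mu_of_isMVSet hmv⟩

theorem stmt15 {V : Type*} [Fintype V] (G : SimpleGraph V) (hconn : G.Connected)
    (htf : G.CliqueFree 3) (x a y w b z : V) (hnd : ([x, a, y, w, b, z] : List V).Nodup)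
    (h1 : G.Adj x a) (h2 : G.Adj a y) (h3 : G.Adj a b) (h4 : G.Adj w b) (h5 : G.Adj b z) :
    IsMVSet G {x, y, w, z} ∧ 4 ≤ mu G :=
  stmt15_general G htf x a y w b z hnd h1 h2 h3 h4 h5
end
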